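/- Let G be the transformed graph of a temporal graph. For any a, b ∈ 𝒱, any t ∈ T_out(a) and any t' ∈ T_in(b): out(a, t) →_G in(b, t') if and only if there exists a temporal path P from a to b with start(P) ≥ t and end(P) ≤ t'. -/

import Mathlib

/-- A copy of an original vertex: `inn v t` is the vertex `in(v, t)` and
`out v t` is the vertex `out(v, t)` of the transformed graph. -/
inductive Copy (V : Type*) where
  | inn : V → ℕ → Copy V
  | out : V → ℕ → Copy V

/-- The original vertex of which a vertex of the transformed graph is a copy. -/
def Copy.base {V : Type*} : Copy V → V
  | .inn v _ => v
  | .out v _ => v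

/-- The time stamp of a vertex of the transformed graph. -/
def Copy.time {V : Type*} : Copy V → ℕ
  | .inn _ t => t
  | .out _ t => t

/-- `T_in(v)`: the set of arrival times of in-edges of `v`. -/
def Tin {V : Type*} (E : Finset (V × V × ℕ × ℕ)) (v : V) : Set ℕ :=
  {s | ∃ u t l, (u, v, t, l) ∈ E ∧ s = t + l}

/-- `T_out(v)`: the set of starting times of out-edges of `v`. -/
def Tout {V : Type*} (E : Finset (V × V × ℕ × ℕ)) (v : V) : Set ℕ :=
  {t | ∃ u l, (v, u, t, l) ∈ E}

/-- The edge relation of the transformed graph `G` of the temporal graph with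
temporal edge set `E`. -/
inductive GEdge {V : Type*} (E : Finset (V × V × ℕ × ℕ)) : Copy V → Copy V → Prop where
  | in_in {v : V} {t t' : ℕ} : t ∈ Tin E v → t' ∈ Tin E v → t < t' →
      (∀ s ∈ Tin E v, s ≤ t ∨ t' ≤ s) → GEdge E (.inn v t) (.inn v t')
  | out_out {v : V} {t t' : ℕ} : t ∈ Tout E v → t' ∈ Tout E v → t < t' →
      (∀ s ∈ Tout E v, s ≤ t ∨ t' ≤ s) → GEdge E (.out v t) (.out v t')
  | in_out {v : V} {t s : ℕ} : t ∈ Tin E v → s ∈ Tout E v → t ≤ s →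
      (∀ s' ∈ Tout E v, t ≤ s' → s ≤ s') →
      (∀ t' ∈ Tin E v, t' ≤ s → t' ≤ t) →
      GEdge E (.inn v t) (.out v s)
  | cross {u v : V} {t l : ℕ} : (u, v, t, l) ∈ E → GEdge E (.out u t) (.inn v (t + l))

/-- Membership in the vertex set of the transformed graph. -/
def IsVert {V : Type*} (E : Finset (V × V × ℕ × ℕ)) : Copy V → Prop
  | .inn v t => t ∈ Tin E v
  | .out v t => t ∈ Tout E v

/-- Consecutive-edge condition for a temporal path: the head vertex of the next
edge is the tail vertex of the current one, and `t_i + λ_i ≤ t_{i+1}`. -/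
def StepOK {V : Type*} (e f : V × V × ℕ × ℕ) : Prop :=
  e.2.1 = f.1 ∧ e.2.2.1 + e.2.2.2 ≤ f.2.2.1

/-- `P` is a temporal path from `a` to `b` in the temporal graph with
temporal edge set `E`. -/
def IsTempPath {V : Type*} (E : Finset (V × V × ℕ × ℕ)) (a b : V)
    (P : List (V × V × ℕ × ℕ)) : Prop :=
  P ≠ [] ∧ (∀ e ∈ P, e ∈ E) ∧ List.Chain' StepOK P ∧
    (P.head?.map fun e => e.1) = some a ∧ (P.getLast?.map fun e => e.2.1) = some b

/-- The starting time `start(P)` of a (nonempty) temporal path. -/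
def startT {V : Type*} (P : List (V × V × ℕ × ℕ)) : ℕ :=
  (P.head?.map fun e => e.2.2.1).getD 0

/-- The ending time `end(P)` of a (nonempty) temporal path. -/
def endT {V : Type*} (P : List (V × V × ℕ × ℕ)) : ℕ :=
  (P.getLast?.map fun e => e.2.2.1 + e.2.2.2).getD 0

/-- The duration `dura(P) = end(P) - start(P)` of a temporal path. -/
def duraT {V : Type*} (P : List (V × V × ℕ × ℕ)) : ℕ := endT P - startT P

/-! A walk in `G` never decreases time stamps, and its `out → in` edges are the edges of a
temporal path, in order; consecutive ones are compatible because a walk from `in(v, s)` to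
`out(v, s')` forces `s ≤ s'`. Conversely, from `in(v, s)` every `out(v, s')` with `s ≤ s'` is
reachable, so the edges of a temporal path can be chained in `G`. -/

open Relation

theorem reflTransGen_of_consecutive {α : Type*} {R : α → α → Prop} {f : ℕ → α} {S : Set ℕ}
    (hR : ∀ t ∈ S, ∀ t' ∈ S, t < t' → (∀ s ∈ S, s ≤ t ∨ t' ≤ s) → R (f t) (f t'))
    {t s : ℕ} (ht : t ∈ S) (hs : s ∈ S) (hts : t ≤ s) : ReflTransGen R (f t) (f s) := by
  induction s using Nat.strong_induction_on with
  | _ s ih =>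
    rcases hts.eq_or_lt with rfl | hlt
    · exact .refl
    set p := sSup {x ∈ S | x < s}
    have hbdd : BddAbove {x ∈ S | x < s} := ⟨s, fun x hx => hx.2.le⟩
    have htp : t ≤ p := le_csSup hbdd ⟨ht, hlt⟩
    obtain ⟨hp, hps⟩ : p ∈ {x ∈ S | x < s} := Nat.sSup_mem ⟨t, ht, hlt⟩ hbdd
    have hgap : ∀ x ∈ S, x ≤ p ∨ s ≤ x := fun x hx =>
      (lt_or_ge x s).imp (fun hxs => le_csSup hbdd ⟨hx, hxs⟩) id
    exact (ih p hps hp htp).tail (hR p hp s hs hps hgap)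

section

variable {V : Type*} {E : Finset (V × V × ℕ × ℕ)}

theorem mem_Tout_of_mem {e : V × V × ℕ × ℕ} (he : e ∈ E) : e.2.2.1 ∈ Tout E e.1 :=
  ⟨e.2.1, e.2.2.2, he⟩

theorem mem_Tin_of_mem {e : V × V × ℕ × ℕ} (he : e ∈ E) :
    e.2.2.1 + e.2.2.2 ∈ Tin E e.2.1 :=
  ⟨e.1, e.2.2.1, e.2.2.2, he, rfl⟩

theorem reach_out_out (v : V) {t s : ℕ} (ht : t ∈ Tout E v) (hs : s ∈ Tout E v)
    (hts : t ≤ s) : ReflTransGen (GEdge E) (.out v t) (.out v s) :=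
  reflTransGen_of_consecutive (f := Copy.out v)
    (fun _ h _ h' hlt hgap => .out_out h h' hlt hgap) ht hs hts

theorem reach_inn_inn (v : V) {t s : ℕ} (ht : t ∈ Tin E v) (hs : s ∈ Tin E v)
    (hts : t ≤ s) : ReflTransGen (GEdge E) (.inn v t) (.inn v s) :=
  reflTransGen_of_consecutive (f := Copy.inn v)
    (fun _ h _ h' hlt hgap => .in_in h h' hlt hgap) ht hs hts

/-- The `in → out` edge leaving `in(v, t)` is taken from the last arrival `t₀` before the first
departure `s₀ ≥ t`; the remaining moves are along the two time chains of `v`. -/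
theorem reach_inn_out (v : V) {t s : ℕ} (ht : t ∈ Tin E v) (hs : s ∈ Tout E v)
    (hts : t ≤ s) : ReflTransGen (GEdge E) (.inn v t) (.out v s) := by
  set s₀ := sInf {x ∈ Tout E v | t ≤ x}
  obtain ⟨hs₀, hts₀⟩ : s₀ ∈ {x ∈ Tout E v | t ≤ x} := Nat.sInf_mem ⟨s, hs, hts⟩
  have hbdd : BddAbove {x ∈ Tin E v | x ≤ s₀} := ⟨s₀, fun x hx => hx.2⟩
  set t₀ := sSup {x ∈ Tin E v | x ≤ s₀}
  obtain ⟨ht₀, ht₀s₀⟩ : t₀ ∈ {x ∈ Tin E v | x ≤ s₀} := Nat.sSup_mem ⟨t, ht, hts₀⟩ hbdd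
  have htt₀ : t ≤ t₀ := le_csSup hbdd ⟨ht, hts₀⟩
  have edge : GEdge E (.inn v t₀) (.out v s₀) :=
    .in_out ht₀ hs₀ ht₀s₀ (fun _ hx hle => Nat.sInf_le ⟨hx, htt₀.trans hle⟩)
      (fun _ hx hle => le_csSup hbdd ⟨hx, hle⟩)
  exact ((reach_inn_inn v ht ht₀ htt₀).tail edge).trans
    (reach_out_out v hs₀ hs (Nat.sInf_le ⟨hs, hts⟩))

theorem reach_out_inn_of_mem {e : V × V × ℕ × ℕ} (he : e ∈ E) {t : ℕ}
    (ht : t ∈ Tout E e.1) (hte : t ≤ e.2.2.1) :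
    ReflTransGen (GEdge E) (.out e.1 t) (.inn e.2.1 (e.2.2.1 + e.2.2.2)) :=
  (reach_out_out e.1 ht (mem_Tout_of_mem he) hte).tail (.cross he)

theorem isTempPath_iff {a b : V} {P : List (V × V × ℕ × ℕ)} :
    IsTempPath E a b P ↔ P ≠ [] ∧ (∀ e ∈ P, e ∈ E) ∧ P.IsChain StepOK ∧
      (P.head?.map fun e => e.1) = some a ∧ (P.getLast?.map fun e => e.2.1) = some b :=
  Iff.rfl

theorem isTempPath_singleton {a b : V} {e : V × V × ℕ × ℕ} :
    IsTempPath E a b [e] ↔ e ∈ E ∧ e.1 = a ∧ e.2.1 = b := by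
  simp [isTempPath_iff]

theorem isTempPath_cons_cons {a b : V} {e f : V × V × ℕ × ℕ} {P : List (V × V × ℕ × ℕ)} :
    IsTempPath E a b (e :: f :: P) ↔
      e ∈ E ∧ e.1 = a ∧ StepOK e f ∧ IsTempPath E e.2.1 b (f :: P) := by
  simp only [isTempPath_iff, List.isChain_cons_cons, List.mem_cons, List.head?_cons,
    Option.map_some, List.getLast?_cons_cons, forall_eq_or_imp, StepOK]
  grind

theorem IsTempPath.head_fst {v b : V} {f : V × V × ℕ × ℕ} {P : List (V × V × ℕ × ℕ)}
    (hP : IsTempPath E v b (f :: P)) : f.1 = v := by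
  simpa using hP.2.2.2.1

theorem IsTempPath.head_mem_Tout {v b : V} {f : V × V × ℕ × ℕ} {P : List (V × V × ℕ × ℕ)}
    (hP : IsTempPath E v b (f :: P)) : f.2.2.1 ∈ Tout E v :=
  hP.head_fst ▸ mem_Tout_of_mem (hP.2.1 f List.mem_cons_self)

@[simp]
theorem endT_cons_cons (e f : V × V × ℕ × ℕ) (P : List (V × V × ℕ × ℕ)) :
    endT (e :: f :: P) = endT (f :: P) := by
  simp [endT, List.getLast?_cons_cons]

def TempReach (E : Finset (V × V × ℕ × ℕ)) (a : V) (t : ℕ) (b : V) (t' : ℕ) : Prop :=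
  ∃ P, IsTempPath E a b P ∧ t ≤ startT P ∧ endT P ≤ t'

theorem TempReach.of_le {a b : V} {s t t' : ℕ} (h : TempReach E a t b t') (hst : s ≤ t) :
    TempReach E a s b t' :=
  let ⟨P, hP, hstart, hend⟩ := h
  ⟨P, hP, hst.trans hstart, hend⟩

theorem TempReach.of_mem {e : V × V × ℕ × ℕ} (he : e ∈ E) {t' : ℕ}
    (hend : e.2.2.1 + e.2.2.2 ≤ t') : TempReach E e.1 e.2.2.1 e.2.1 t' :=
  ⟨[e], isTempPath_singleton.2 ⟨he, rfl, rfl⟩, le_rfl, hend⟩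

theorem TempReach.cons {e : V × V × ℕ × ℕ} (he : e ∈ E) {b : V} {t' : ℕ}
    (h : TempReach E e.2.1 (e.2.2.1 + e.2.2.2) b t') : TempReach E e.1 e.2.2.1 b t' := by
  obtain ⟨_ | ⟨f, P⟩, hP, hstart, hend⟩ := h
  · exact absurd rfl hP.1
  exact ⟨e :: f :: P, isTempPath_cons_cons.2 ⟨he, rfl, ⟨hP.head_fst.symm, hstart⟩, hP⟩,
    le_rfl, by simpa using hend⟩

theorem tempReach_of_reach {b : V} {t' : ℕ} {x : Copy V}
    (h : ReflTransGen (GEdge E) x (.inn b t')) :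
    (∃ s ≤ t', x = .inn b s) ∨ TempReach E x.base x.time b t' := by
  induction h using ReflTransGen.head_induction_on with
  | refl => exact .inl ⟨t', le_rfl, rfl⟩
  | head edge _ ih =>
    cases edge with
    | in_in _ _ hlt _ =>
      rcases ih with ⟨s, hs, ⟨⟩⟩ | h
      · exact .inl ⟨_, by omega, rfl⟩
      · exact .inr (h.of_le hlt.le)
    | out_out _ _ hlt _ =>
      rcases ih with ⟨s, -, ⟨⟩⟩ | h
      exact .inr (h.of_le hlt.le)
    | in_out _ _ hle _ _ =>
      rcases ih with ⟨s, -, ⟨⟩⟩ | h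
      exact .inr (h.of_le hle)
    | cross he =>
      rcases ih with ⟨s, hs, ⟨⟩⟩ | h
      · exact .inr (TempReach.of_mem he hs)
      · exact .inr (TempReach.cons he h)

theorem TempReach.reach_out_inn {a b : V} {t t' : ℕ} (h : TempReach E a t b t')
    (ht : t ∈ Tout E a) (ht' : t' ∈ Tin E b) :
    ReflTransGen (GEdge E) (.out a t) (.inn b t') := by
  obtain ⟨P, hP, hstart, hend⟩ := h
  induction P generalizing a t with
  | nil => exact absurd rfl hP.1
  | cons e P ih =>
    cases P with
    | nil =>
      obtain ⟨he, rfl, rfl⟩ := isTempPath_singleton.1 hP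
      exact (reach_out_inn_of_mem he ht hstart).trans
        (reach_inn_inn _ (mem_Tin_of_mem he) ht' hend)
    | cons f P =>
      obtain ⟨he, rfl, hstep, hP'⟩ := isTempPath_cons_cons.1 hP
      have hf := hP'.head_mem_Tout
      exact ((reach_out_inn_of_mem he ht hstart).trans
        (reach_inn_out _ (mem_Tin_of_mem he) hf hstep.2)).trans
        (ih hf hP' le_rfl (by simpa using hend))

end

theorem reach_out_in_iff_temporal_path {V : Type*} (E : Finset (V × V × ℕ × ℕ))
    (a b : V) (t t' : ℕ) (ht : t ∈ Tout E a) (ht' : t' ∈ Tin E b) :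
    Relation.ReflTransGen (GEdge E) (.out a t) (.inn b t') ↔
      ∃ P, IsTempPath E a b P ∧ t ≤ startT P ∧ endT P ≤ t' :=
  ⟨fun h => (tempReach_of_reach h).resolve_left (by rintro ⟨s, -, ⟨⟩⟩),
    fun h => TempReach.reach_out_inn h ht ht'⟩
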